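/- Let $V \to M$ be a real vector bundle of rank $r$ over a manifold $M$, and suppose $TM \oplus V$ admits a spin structure (i.e. $w_1(TM \oplus V) = 0$ and $w_2(TM \oplus V) = 0$). If $N \subseteq M$ is a closed embedded submanifold whose normal bundle is isomorphic to the restriction $V|_N$, then $TN \oplus (V \oplus V)|_N$ admits a spin structure, i.e. $w_1(TN \oplus (V\oplus V)|_N) = 0$ and $w_2(TN \oplus (V\oplus V)|_N) = 0$. -/
import Mathlib


/-!
Statement 3: Let `V → M` be a real vector bundle with `TM ⊕ V` spin
(`w₁(TM ⊕ V) = 0`, `w₂(TM ⊕ V) = 0`).  If `N ⊆ M` is a closed embedded submanifold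
with normal bundle isomorphic to `V|_N`, then `TN ⊕ (V ⊕ V)|_N` is spin.

`A = H^*(M; ℤ/2)` and `B = H^*(N; ℤ/2)` are the mod 2 cohomology rings, `ρ = i^*` the
restriction.  The Whitney sum formula for `TM|_N ≅ TN ⊕ ν_N` is a hypothesis, as is
`ν_N ≅ V|_N`.  The conclusion is the Whitney-sum expansion of
`w₁(TN ⊕ V|_N ⊕ V|_N) = 0` and `w₂(TN ⊕ V|_N ⊕ V|_N) = 0`.
-/
theorem stmt_3
    {A B : Type*} [CommRing A] [CommRing B]
    -- mod 2 coefficients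
    (h2 : ∀ x : B, x + x = 0)
    (ρ : A →+* B)                          -- restriction `i^* : H^*(M) → H^*(N)`
    (w1TM w2TM w1V w2V : A)                -- Stiefel-Whitney classes of `TM` and `V` on `M`
    (w1TN w2TN w1nu w2nu : B)              -- Stiefel-Whitney classes of `TN` and `ν_N` on `N`
    (hnu1 : w1nu = ρ w1V) (hnu2 : w2nu = ρ w2V)      -- `ν_N ≅ V|_N`
    (hWh1 : ρ w1TM = w1TN + w1nu)                    -- Whitney: `w₁(TM)|_N = w₁(TN ⊕ ν_N)`
    (hWh2 : ρ w2TM = w2TN + w1TN * w1nu + w2nu)      -- Whitney: `w₂(TM)|_N = w₂(TN ⊕ ν_N)`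
    (hspin1 : w1TM + w1V = 0)                        -- `w₁(TM ⊕ V) = 0`
    (hspin2 : w2TM + w1TM * w1V + w2V = 0)           -- `w₂(TM ⊕ V) = 0`
    : -- `w₁(TN ⊕ (V ⊕ V)|_N) = 0`
      w1TN + (ρ w1V + ρ w1V) = 0 ∧
      -- `w₂(TN ⊕ (V ⊕ V)|_N) = 0`
      w2TN + w1TN * (ρ w1V + ρ w1V) + (ρ w2V + ρ w2V + ρ w1V * ρ w1V) = 0 := by
  subst hnu1 hnu2
  have e1 : ρ w1TM + ρ w1V = 0 := by rw [← map_add, hspin1, map_zero]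
  have e2 : ρ w2TM + ρ w1TM * ρ w1V + ρ w2V = 0 := by
    rw [← map_mul, ← map_add, ← map_add, hspin2, map_zero]
  exact ⟨by linear_combination e1 - hWh1,
         by linear_combination e2 - hWh2 - ρ w1V * hWh1⟩
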